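/- arXiv:2506.07162 — 3 statements merged into one kernel-verified Lean document; each statement's English description precedes it below -/
import Mathlib

section
/- For nonnegative random variables X_1,...,X_n, nonnegative costs c_1,...,c_n, and {0,1}-valued random variables A_1,...,A_n, I_1,...,I_n such that at most one A_i equals 1, and such that whenever A_i = 1 and U_i = 1 (where U_i denotes the indicator that some j with c_j ≥ c_i has I_j = 1) we have max_{j: I_j=1} c_j ≥ c_i, the expectation E[Σ_i X_i A_i − max_i c_i I_i] is at most E[Σ_i X_i A_i · 1{U_i = 0}] + E[max_i (X_i − c_i)^+]. -/
open MeasureTheory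

theorem stmt_0 {Ω : Type*} [MeasurableSpace Ω] (μ : Measure Ω)
    [IsProbabilityMeasure μ] (n : ℕ)
    (X A I : Fin n → Ω → ℝ) (c : Fin n → ℝ)
    (hX : ∀ i ω, 0 ≤ X i ω) (hc : ∀ i, 0 ≤ c i)
    (hA : ∀ i ω, A i ω = 0 ∨ A i ω = 1)
    (hI : ∀ i ω, I i ω = 0 ∨ I i ω = 1)
    (hone : ∀ ω, ∑ i, A i ω ≤ 1)
    (U : Fin n → Ω → ℝ)
    (hU : ∀ i ω, U i ω = if ∃ j, c i ≤ c j ∧ I j ω = 1 then 1 else 0)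
    (hover : ∀ i ω, A i ω = 1 → U i ω = 1 → c i ≤ ⨆ j, c j * I j ω)
    (hint1 : Integrable (fun ω => (∑ i, X i ω * A i ω) - ⨆ i, c i * I i ω) μ)
    (hint2 : Integrable
      (fun ω => ∑ i, X i ω * A i ω * (if U i ω = 0 then 1 else 0)) μ)
    (hint3 : Integrable (fun ω => ⨆ i, max (X i ω - c i) 0) μ) :
    ∫ ω, ((∑ i, X i ω * A i ω) - ⨆ i, c i * I i ω) ∂μ ≤
      (∫ ω, (∑ i, X i ω * A i ω * (if U i ω = 0 then 1 else 0)) ∂μ) +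
      ∫ ω, (⨆ i, max (X i ω - c i) 0) ∂μ := by
  have key : ∀ ω, ((∑ i, X i ω * A i ω) - ⨆ i, c i * I i ω) ≤
      (∑ i, X i ω * A i ω * (if U i ω = 0 then 1 else 0)) +
      ⨆ i, max (X i ω - c i) 0 := by
    intro ω
    rcases Nat.eq_zero_or_pos n with hn | hn
    · subst hn
      simp [iSup, Set.range_eq_empty, Real.sSup_empty]
    have hne : Nonempty (Fin n) := ⟨⟨0, hn⟩⟩
    have hSnn : (0:ℝ) ≤ ⨆ i, c i * I i ω := by
      refine le_ciSup_of_le (Finite.bddAbove_range _) ⟨0, hn⟩ ?_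
      rcases hI ⟨0, hn⟩ ω with h | h <;> simp [h, hc]
    have hTnn : (0:ℝ) ≤ ⨆ i, max (X i ω - c i) 0 :=
      le_ciSup_of_le (Finite.bddAbove_range _) ⟨0, hn⟩ (le_max_right _ _)
    have hsum2nn : 0 ≤ ∑ i, X i ω * A i ω * (if U i ω = 0 then 1 else 0) := by
      apply Finset.sum_nonneg
      intro i _
      have h1 : 0 ≤ A i ω := by rcases hA i ω with h | h <;> simp [h]
      have h2 : (0:ℝ) ≤ if U i ω = 0 then 1 else 0 := by split <;> norm_num
      exact mul_nonneg (mul_nonneg (hX i ω) h1) h2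
    by_cases hex : ∃ k, A k ω = 1
    · obtain ⟨k, hk⟩ := hex
      have hothers : ∀ j, j ≠ k → A j ω = 0 := by
        intro j hj
        by_contra hnej
        have hj1 : A j ω = 1 := (hA j ω).resolve_left hnej
        have hsub : ∑ i ∈ ({j, k} : Finset (Fin n)), A i ω ≤ ∑ i, A i ω := by
          apply Finset.sum_le_sum_of_subset_of_nonneg (Finset.subset_univ _)
          intro i _ _
          rcases hA i ω with h | h <;> simp [h]
        rw [Finset.sum_pair hj, hj1, hk] at hsub
        have := hone ω
        linarith
      have hsum1 : ∑ i, X i ω * A i ω = X k ω := by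
        rw [Finset.sum_eq_single k]
        · simp [hk]
        · intro j _ hj; simp [hothers j hj]
        · simp
      have hsum2 : ∑ i, X i ω * A i ω * (if U i ω = 0 then 1 else 0)
          = X k ω * (if U k ω = 0 then 1 else 0) := by
        rw [Finset.sum_eq_single k]
        · simp [hk]
        · intro j _ hj; simp [hothers j hj]
        · simp
      by_cases hUk : U k ω = 0
      · rw [hsum1, hsum2, if_pos hUk]
        linarith
      · have hUk1 : U k ω = 1 := by
          rw [hU k ω] at hUk ⊢
          by_cases h : ∃ j, c k ≤ c j ∧ I j ω = 1
          · simp [h]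
          · simp [h] at hUk
        have hck : c k ≤ ⨆ j, c j * I j ω := hover k ω hk hUk1
        have hmax : X k ω - c k ≤ ⨆ i, max (X i ω - c i) 0 :=
          le_ciSup_of_le (Finite.bddAbove_range _) k (le_max_left _ _)
        rw [hsum1]
        linarith
    · push_neg at hex
      have hall : ∀ i, A i ω = 0 := fun i => (hA i ω).resolve_right (hex i)
      have h1 : ∑ i, X i ω * A i ω = 0 := by
        apply Finset.sum_eq_zero; intro i _; simp [hall i]
      rw [h1]
      linarith
  calc ∫ ω, ((∑ i, X i ω * A i ω) - ⨆ i, c i * I i ω) ∂μ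
      ≤ ∫ ω, ((∑ i, X i ω * A i ω * (if U i ω = 0 then 1 else 0)) +
          ⨆ i, max (X i ω - c i) 0) ∂μ :=
        integral_mono hint1 (hint2.add hint3) key
    _ = _ := integral_add hint2 hint3
end

section
/- Let n ≥ 6 and consider n i.i.d. boxes each worth 1 with probability 1/n and 0 otherwise, with inspection cost 2/n per box. Any direct-inspection policy (parameterized by the number k of boxes it is willing to inspect, selecting the first inspected box of value 1, and selecting an uninspected box if all k inspections fail and k < n) achieves expected utility at most 1/n, while 1 − (1 − 1/n)^n − 2/n ≥ 1/6; hence the ratio between the delegation benchmark and the best direct-inspection utility is at least n/6. -/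
lemma aux_sum (x : ℝ) (hx0 : 0 ≤ x) (hx1 : x ≤ 1) (k : ℕ) :
    (∑ i ∈ Finset.Icc 1 k, x * (1 - x) ^ (i - 1) * (1 - (i : ℝ) * (2 * x)))
      + (1 - x) ^ k * (x - (k : ℝ) * (2 * x)) ≤ x := by
  induction k with
  | zero => simp
  | succ k ih =>
    rw [Finset.sum_Icc_succ_top (by omega : 1 ≤ k + 1)]
    have hq : (0:ℝ) ≤ (1 - x) ^ k := pow_nonneg (by linarith) k
    have key : x * (1 - x) ^ ((k + 1) - 1) * (1 - ((k + 1 : ℕ) : ℝ) * (2 * x))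
        + (1 - x) ^ (k + 1) * (x - ((k + 1 : ℕ) : ℝ) * (2 * x))
        = (1 - x) ^ k * (x - (k : ℝ) * (2 * x)) - (1 - x) ^ k * (x + x ^ 2) := by
      have : (k + 1) - 1 = k := by omega
      rw [this, pow_succ]
      push_cast
      ring
    have hnn : 0 ≤ (1 - x) ^ k * (x + x ^ 2) := by positivity
    linarith

theorem stmt_11 (n : ℕ) (hn : 6 ≤ n) :
    (∀ k : ℕ, 1 ≤ k → k ≤ n →
      (∑ i ∈ Finset.Icc 1 k,
          (1 / (n : ℝ)) * (1 - 1 / (n : ℝ)) ^ (i - 1) * (1 - (i : ℝ) * (2 / (n : ℝ))))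
        + (1 - 1 / (n : ℝ)) ^ k * (1 / (n : ℝ) - (k : ℝ) * (2 / (n : ℝ)))
      ≤ 1 / (n : ℝ)) ∧
    (1 : ℝ) / 6 ≤ 1 - (1 - 1 / (n : ℝ)) ^ n - 2 / (n : ℝ) ∧
    (∀ u : ℝ, u ≤ 1 / (n : ℝ) →
      ((n : ℝ) / 6) * u ≤ 1 - (1 - 1 / (n : ℝ)) ^ n - 2 / (n : ℝ)) := by
  have hn6 : (6:ℝ) ≤ (n:ℝ) := by exact_mod_cast hn
  have hnpos : (0:ℝ) < (n:ℝ) := by linarith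
  have hx0 : (0:ℝ) ≤ 1 / (n:ℝ) := by positivity
  have hx1 : 1 / (n:ℝ) ≤ 1 := by
    rw [div_le_one hnpos]; linarith
  -- Part 2 core: (1 - 1/n)^n ≤ 1/2
  have hber : (2:ℝ) ≤ (1 + 1 / (n:ℝ)) ^ n := by
    have := one_add_mul_le_pow (a := 1 / (n:ℝ)) (by linarith) n
    have hcast : (n:ℝ) * (1 / (n:ℝ)) = 1 := by field_simp
    calc (2:ℝ) = 1 + (n:ℝ) * (1 / (n:ℝ)) := by rw [hcast]; norm_num
    _ ≤ (1 + 1 / (n:ℝ)) ^ n := this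
  have hprod : (1 - 1 / (n:ℝ)) ^ n * (1 + 1 / (n:ℝ)) ^ n ≤ 1 := by
    rw [← mul_pow]
    have h1 : (1 - 1 / (n:ℝ)) * (1 + 1 / (n:ℝ)) = 1 - (1 / (n:ℝ))^2 := by ring
    rw [h1]
    apply pow_le_one₀ (by nlinarith) (by nlinarith)
  have hqk : (0:ℝ) ≤ (1 - 1 / (n:ℝ)) ^ n := pow_nonneg (by linarith) n
  have hhalf : (1 - 1 / (n:ℝ)) ^ n ≤ 1 / 2 := by
    nlinarith [mul_le_mul_of_nonneg_left hber hqk]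
  have h2n : 2 / (n:ℝ) ≤ 1 / 3 := by
    rw [div_le_div_iff₀ hnpos (by norm_num)]; linarith
  have part2 : (1 : ℝ) / 6 ≤ 1 - (1 - 1 / (n : ℝ)) ^ n - 2 / (n : ℝ) := by linarith
  refine ⟨?_, part2, ?_⟩
  · intro k _ _
    have := aux_sum (1 / (n:ℝ)) hx0 hx1 k
    simpa [show (2:ℝ) / (n:ℝ) = 2 * (1 / (n:ℝ)) from by ring] using this
  · intro u hu
    have h1 : ((n:ℝ) / 6) * u ≤ ((n:ℝ) / 6) * (1 / (n:ℝ)) :=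
      mul_le_mul_of_nonneg_left hu (by positivity)
    have h2 : ((n:ℝ) / 6) * (1 / (n:ℝ)) = 1 / 6 := by field_simp
    linarith
end

section
/- In the tightness instance with 0 < ε < 1: two i.i.d. boxes with value 1/ε with probability ε (free inspection) and one deterministic box of value 1 (inspection cost 1), the quantity (1/2)·E[max_i (X_i − c_i)^+] equals 1 − ε/2, which is strictly less than max_i E[X_i] = 1. -/
/-! Since `X 2 - c 2 = 0` and `X 0, X 1 ≥ 0`, the best net value `max_i (X i - c i)⁺` is
`max (X 0) (X 1) = (1/ε) · 1_{A ∪ B}` with `A = {X 0 = 1/ε}`, `B = {X 1 = 1/ε}`.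
Independence gives `P(A ∪ B) = 2ε - ε²`, so its expectation is `2 - ε`;
each `X i` has mean `ε · (1/ε) = 1`. -/

open MeasureTheory ProbabilityTheory

lemma eq_indicator_of_forall_eq_or_eq_zero {Ω β : Type*} [Zero β] {f : Ω → β} {a : β}
    (h : ∀ ω, f ω = a ∨ f ω = 0) : f = {ω | f ω = a}.indicator fun _ ↦ a := by
  funext ω
  by_cases hω : f ω = a
  · simp [hω]
  · rw [Set.indicator_of_notMem (s := {ω | f ω = a}) hω, (h ω).resolve_left hω]

lemma integral_eq_measureReal_mul_of_forall_eq_or_eq_zero {Ω : Type*}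
    [MeasurableSpace Ω] {μ : Measure Ω} {f : Ω → ℝ} {a : ℝ} (hf : Measurable f)
    (h : ∀ ω, f ω = a ∨ f ω = 0) :
    ∫ ω, f ω ∂μ = μ.real {ω | f ω = a} * a := by
  conv_lhs => rw [eq_indicator_of_forall_eq_or_eq_zero h]
  have hmeas : MeasurableSet {ω | f ω = a} := hf (measurableSet_singleton a)
  rw [integral_indicator_const _ hmeas, smul_eq_mul]

lemma max_indicator_const_eq_indicator_union {Ω : Type*} {A B : Set Ω} {a : ℝ} (ha : 0 ≤ a)
    (ω : Ω) :
    max (A.indicator (fun _ ↦ a) ω) (B.indicator (fun _ ↦ a) ω) =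
      (A ∪ B).indicator (fun _ ↦ a) ω := by
  by_cases hA : ω ∈ A <;> by_cases hB : ω ∈ B <;> simp [hA, hB, ha]

lemma ProbabilityTheory.IndepSet.measureReal_union {Ω : Type*} [MeasurableSpace Ω]
    {μ : Measure Ω} [IsFiniteMeasure μ] {A B : Set Ω} (hB : MeasurableSet B)
    (h : IndepSet A B μ) :
    μ.real (A ∪ B) = μ.real A + μ.real B - μ.real A * μ.real B := by
  have hinter : μ.real (A ∩ B) = μ.real A * μ.real B := by
    simp only [measureReal_def, h.measure_inter_eq_mul, ENNReal.toReal_mul]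
  linarith [measureReal_union_add_inter (μ := μ) (s := A) hB]

lemma iSup_max_sub_zero_eq_max (x : Fin 3 → ℝ) (h0 : 0 ≤ x 0) (h1 : 0 ≤ x 1)
    (h2 : x 2 ≤ 1) :
    ⨆ i, max (x i - ![0, 0, 1] i) 0 = max (x 0) (x 1) := by
  apply le_antisymm
  · refine ciSup_le fun i ↦ ?_
    fin_cases i <;> simp [h0, h1, h2]
  · have hbdd := (Set.finite_range fun i ↦ max (x i - ![0, 0, 1] i) 0).bddAbove
    refine max_le (le_ciSup_of_le hbdd 0 ?_) (le_ciSup_of_le hbdd 1 ?_) <;> simp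

theorem stmt_13_general {Ω : Type*} [MeasurableSpace Ω] (μ : Measure Ω)
    [IsProbabilityMeasure μ] (ε : ℝ) (hε0 : 0 < ε)
    (X : Fin 3 → Ω → ℝ) (c : Fin 3 → ℝ) (hc : c = ![0, 0, 1])
    (hmeas : ∀ i, Measurable (X i))
    (hdet : ∀ ω, X 2 ω = 1)
    (hval0 : ∀ ω, X 0 ω = 1 / ε ∨ X 0 ω = 0)
    (hval1 : ∀ ω, X 1 ω = 1 / ε ∨ X 1 ω = 0)
    (hp0 : μ {ω | X 0 ω = 1 / ε} = ENNReal.ofReal ε)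
    (hp1 : μ {ω | X 1 ω = 1 / ε} = ENNReal.ofReal ε)
    (hind : IndepFun (X 0) (X 1) μ) :
    (1 / 2) * ∫ ω, (⨆ i, max (X i ω - c i) 0) ∂μ = 1 - ε / 2 ∧
    1 - ε / 2 < 1 ∧
    ∀ i, ∫ ω, X i ω ∂μ = 1 := by
  subst hc
  set A := {ω | X 0 ω = 1 / ε}
  set B := {ω | X 1 ω = 1 / ε}
  have hμA : μ.real A = ε := by rw [measureReal_def, hp0, ENNReal.toReal_ofReal hε0.le]
  have hμB : μ.real B = ε := by rw [measureReal_def, hp1, ENNReal.toReal_ofReal hε0.le]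
  have hAB : IndepSet A B μ := (indepFun_iff_indepSet_preimage (hmeas 0) (hmeas 1)).1 hind _ _
    (measurableSet_singleton _) (measurableSet_singleton _)
  have nonneg_of_eq_or_eq_zero {f : Ω → ℝ} (hf : ∀ ω, f ω = 1 / ε ∨ f ω = 0)
      (ω : Ω) : 0 ≤ f ω := by
    rcases hf ω with h | h <;> rw [h]
    positivity
  have hbest (ω : Ω) :
      ⨆ i, max (X i ω - ![0, 0, 1] i) 0 = (A ∪ B).indicator (fun _ ↦ 1 / ε) ω := by
    refine (iSup_max_sub_zero_eq_max (X · ω) (nonneg_of_eq_or_eq_zero hval0 ω)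
      (nonneg_of_eq_or_eq_zero hval1 ω) (hdet ω).le).trans ?_
    rw [congrFun (eq_indicator_of_forall_eq_or_eq_zero hval0) ω,
      congrFun (eq_indicator_of_forall_eq_or_eq_zero hval1) ω]
    exact max_indicator_const_eq_indicator_union (by positivity) ω
  have hA_meas : MeasurableSet A := hmeas 0 (measurableSet_singleton _)
  have hB_meas : MeasurableSet B := hmeas 1 (measurableSet_singleton _)
  refine ⟨?_, by linarith, fun i ↦ ?_⟩
  · rw [integral_congr_ae (.of_forall hbest), integral_indicator_const _ (hA_meas.union hB_meas),
      smul_eq_mul, hAB.measureReal_union hB_meas, hμA, hμB]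
    field_simp
    ring
  · fin_cases i
    · exact (integral_eq_measureReal_mul_of_forall_eq_or_eq_zero (hmeas 0) hval0).trans
        (by rw [hμA]; field_simp)
    · exact (integral_eq_measureReal_mul_of_forall_eq_or_eq_zero (hmeas 1) hval1).trans
        (by rw [hμB]; field_simp)
    · simp [hdet]

theorem stmt_13 {Ω : Type*} [MeasurableSpace Ω] (μ : Measure Ω)
    [IsProbabilityMeasure μ] (ε : ℝ) (hε0 : 0 < ε) (hε1 : ε < 1)
    (X : Fin 3 → Ω → ℝ) (c : Fin 3 → ℝ) (hc : c = ![0, 0, 1])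
    (hmeas : ∀ i, Measurable (X i))
    (hdet : ∀ ω, X 2 ω = 1)
    (hval0 : ∀ ω, X 0 ω = 1 / ε ∨ X 0 ω = 0)
    (hval1 : ∀ ω, X 1 ω = 1 / ε ∨ X 1 ω = 0)
    (hp0 : μ {ω | X 0 ω = 1 / ε} = ENNReal.ofReal ε)
    (hp1 : μ {ω | X 1 ω = 1 / ε} = ENNReal.ofReal ε)
    (hind : IndepFun (X 0) (X 1) μ) :
    (1 / 2) * ∫ ω, (⨆ i, max (X i ω - c i) 0) ∂μ = 1 - ε / 2 ∧
    1 - ε / 2 < 1 ∧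
    ∀ i, ∫ ω, X i ω ∂μ = 1 :=
  stmt_13_general μ ε hε0 X c hc hmeas hdet hval0 hval1 hp0 hp1 hind
end
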